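/- Extended optional stopping theorem with polynomial growth, submartingale version (lower-bound half of Theorem D.3): Let (Ω, F, P) be a probability space with filtration (F_n)_{n∈ℕ}, let (L_n)_{n∈ℕ} be a submartingale with respect to (F_n) (adapted, integrable, and E[L_{n+1} | F_n] ≥ L_n a.s. for all n), and let T : Ω → ℕ ∪ {∞} be a stopping time with respect to (F_n). Suppose there exist ℓ ∈ ℕ with ℓ ≥ 1 and a constant C ≥ 0 such that E[T^ℓ] < ∞ and, for every n ∈ ℕ, |L_n| ≤ C·(n+1)^ℓ holds P-almost surely. Then T < ∞ almost surely, the stopped value L_T is integrable, and E[L_T] ≥ E[L_0]. -/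

import Mathlib

open MeasureTheory Filter
open scoped ENNReal

/-!
Optional stopping for the bounded stopping times `n ∧ T` gives `E[L_0] ≤ E[L_{n ∧ T}]`. Since
`E[T^ℓ] < ∞` with `ℓ ≥ 1`, `T` is a.s. finite, so `L_{n ∧ T} → L_T` a.s.; the growth bound
dominates every `|L_{n ∧ T}|` by `C (T + 1)^ℓ ≤ 2^(ℓ-1) C (T^ℓ + 1)`, which is integrable, and
dominated convergence passes the inequality to the limit.
-/

namespace MeasureTheory

variable {Ω : Type*} {mΩ : MeasurableSpace Ω} {P : Measure Ω} {T : Ω → ℕ∞}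

-- `ℕ∞` carries the discrete σ-algebra, whereas stopping-time lemmas use the Borel σ-algebra of
-- `WithTop ℕ`.
theorem IsStoppingTime.measurable_enat {ℱ : Filtration ℕ mΩ} (hT : IsStoppingTime ℱ T) :
    Measurable T :=
  measurable_to_countable' fun x => hT.measurable' (measurableSet_singleton (α := WithTop ℕ) x)

theorem Measurable.comp_enat {β : Type*} [MeasurableSpace β] (hT : Measurable T) (f : ℕ∞ → β) :
    Measurable fun ω => f (T ω) :=
  measurable_from_top.comp hT

theorem ae_lt_top_of_lintegral_pow_lt_top (hT : Measurable T) {ℓ : ℕ} (hℓ : ℓ ≠ 0)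
    (hmom : ∫⁻ ω, (T ω : ℝ≥0∞) ^ ℓ ∂P < ⊤) : ∀ᵐ ω ∂P, T ω < ⊤ := by
  filter_upwards [ae_lt_top (hT.comp_enat fun t => (t : ℝ≥0∞) ^ ℓ) hmom.ne] with ω hω
  refine lt_top_iff_ne_top.2 fun hTω => ?_
  simp [hTω, hℓ] at hω

theorem integrable_toNat_pow (hT : Measurable T) {ℓ : ℕ}
    (hmom : ∫⁻ ω, (T ω : ℝ≥0∞) ^ ℓ ∂P < ⊤) :
    Integrable (fun ω => ((T ω).toNat : ℝ) ^ ℓ) P := by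
  refine ⟨(hT.comp_enat fun t => (t.toNat : ℝ) ^ ℓ).aestronglyMeasurable,
    lt_of_le_of_lt (lintegral_mono fun ω => ?_) hmom⟩
  rw [enorm_pow, Real.enorm_natCast]
  gcongr
  exact ENat.toENNReal_le.2 (ENat.natCast_toNat_le_self _)

theorem integrable_toNat_add_one_pow [IsFiniteMeasure P] (hT : Measurable T) {ℓ : ℕ}
    (hmom : ∫⁻ ω, (T ω : ℝ≥0∞) ^ ℓ ∂P < ⊤) :
    Integrable (fun ω => ((T ω).toNat + 1 : ℝ) ^ ℓ) P := by
  refine (((integrable_toNat_pow hT hmom).add (integrable_const 1)).const_mul (2 ^ (ℓ - 1))).mono'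
    (hT.comp_enat fun t => (t.toNat + 1 : ℝ) ^ ℓ).aestronglyMeasurable
    (Eventually.of_forall fun ω => ?_)
  rw [Real.norm_of_nonneg (by positivity)]
  exact (add_pow_le (Nat.cast_nonneg _) zero_le_one ℓ).trans_eq (by simp)

section Stopping

variable {E : Type*} [NormedAddCommGroup E] {u : ℕ → Ω → E} {τ : Ω → WithTop ℕ} {g : Ω → ℝ}

theorem tendsto_stoppedProcess_atTop {ω : Ω} (hω : τ ω ≠ ⊤) :
    Tendsto (fun n => stoppedProcess u τ n ω) atTop (nhds (stoppedValue u τ ω)) := by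
  obtain ⟨k, hk⟩ := WithTop.ne_top_iff_exists.1 hω
  refine tendsto_atTop_of_eventually_const (i₀ := k) fun n hn => ?_
  rw [stoppedProcess_eq_of_ge (by rw [← hk]; exact_mod_cast hn)]
  rfl

theorem norm_stoppedValue_le {σ : Ω → WithTop ℕ} {ω : Ω} (hσ : σ ω ≠ ⊤) (hστ : σ ω ≤ τ ω)
    (hdom : ∀ k : ℕ, (k : WithTop ℕ) ≤ τ ω → ‖u k ω‖ ≤ g ω) : ‖stoppedValue u σ ω‖ ≤ g ω := by
  obtain ⟨k, hk⟩ := WithTop.ne_top_iff_exists.1 hσ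
  simp only [stoppedValue, ← hk] at hστ ⊢
  exact hdom k hστ

theorem integrable_stoppedValue_of_dominated {ℱ : Filtration ℕ mΩ} (hτ : IsStoppingTime ℱ τ)
    (hu : ∀ n, Integrable (u n) P) (hfin : ∀ᵐ ω ∂P, τ ω ≠ ⊤) (hg : Integrable g P)
    (hdom : ∀ᵐ ω ∂P, ∀ k : ℕ, (k : WithTop ℕ) ≤ τ ω → ‖u k ω‖ ≤ g ω) :
    Integrable (stoppedValue u τ) P :=
  hg.mono'
    (aestronglyMeasurable_of_tendsto_ae atTop
      (fun n => (integrable_stoppedProcess hτ hu n).aestronglyMeasurable)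
      (hfin.mono fun _ => tendsto_stoppedProcess_atTop))
    (by filter_upwards [hfin, hdom] with ω hω hωdom using norm_stoppedValue_le hω le_rfl hωdom)

theorem Submartingale.integral_le_integral_stoppedValue_of_dominated {ℱ : Filtration ℕ mΩ}
    [SigmaFiniteFiltration P ℱ] {L : ℕ → Ω → ℝ} (hL : Submartingale L ℱ P)
    (hτ : IsStoppingTime ℱ τ) (hfin : ∀ᵐ ω ∂P, τ ω ≠ ⊤) (hg : Integrable g P)
    (hdom : ∀ᵐ ω ∂P, ∀ k : ℕ, (k : WithTop ℕ) ≤ τ ω → ‖L k ω‖ ≤ g ω) :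
    ∫ ω, L 0 ω ∂P ≤ ∫ ω, stoppedValue L τ ω ∂P := by
  have hlim : Tendsto (fun n => ∫ ω, stoppedProcess L τ n ω ∂P) atTop
      (nhds (∫ ω, stoppedValue L τ ω ∂P)) :=
    tendsto_integral_of_dominated_convergence g
      (fun n => (integrable_stoppedProcess hτ hL.integrable n).aestronglyMeasurable) hg
      (fun n => hdom.mono fun _ hω =>
        norm_stoppedValue_le (σ := fun ω => min (n : WithTop ℕ) (τ ω))
          (ne_top_of_le_ne_top WithTop.coe_ne_top (min_le_left _ _)) (min_le_right _ _) hω)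
      (hfin.mono fun _ => tendsto_stoppedProcess_atTop)
  refine ge_of_tendsto hlim (Eventually.of_forall fun n => ?_)
  exact hL.expected_stoppedValue_mono (isStoppingTime_const ℱ 0)
    ((isStoppingTime_const ℱ n).min hτ) (fun _ => bot_le) (fun _ => min_le_left _ _)

end Stopping

-- `stoppedValue` reads `⊤` as an arbitrary index, `ENat.toNat` as `0`.
theorem stoppedValue_ae_eq_toNat {β : Type*} (u : ℕ → Ω → β) (hfin : ∀ᵐ ω ∂P, T ω ≠ ⊤) :
    stoppedValue u T =ᵐ[P] fun ω => u (T ω).toNat ω := by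
  filter_upwards [hfin] with ω hω
  obtain ⟨k, hk⟩ := WithTop.ne_top_iff_exists.1 hω
  simp only [stoppedValue, ← hk]
  rfl

end MeasureTheory

/-- Extended optional stopping theorem with polynomial growth, submartingale
version (lower-bound half of Theorem D.3): if `(L_n)` is a submartingale,
`T` is a stopping time with `E[T^ℓ] < ∞` for some `ℓ ≥ 1`, and
`|L_n| ≤ C·(n+1)^ℓ` a.s. for all `n`, then `T < ∞` a.s., the stopped value
`L_T` is integrable, and `E[L_T] ≥ E[L_0]`. -/
theorem extended_optional_stopping_submartingale
    {Ω : Type*} {mΩ : MeasurableSpace Ω} (P : Measure Ω) [IsProbabilityMeasure P]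
    (ℱ : Filtration ℕ mΩ) (L : ℕ → Ω → ℝ)
    (hL : Submartingale L ℱ P)
    (T : Ω → ℕ∞) (hT : ∀ n : ℕ, MeasurableSet[ℱ n] {ω | T ω ≤ (n : ℕ∞)})
    (ℓ : ℕ) (hℓ : 1 ≤ ℓ) (C : ℝ) (hC : 0 ≤ C)
    (hTmom : ∫⁻ ω, (T ω : ℝ≥0∞) ^ ℓ ∂P < ⊤)
    (hgrowth : ∀ n : ℕ, ∀ᵐ ω ∂P, |L n ω| ≤ C * (n + 1) ^ ℓ) :
    (∀ᵐ ω ∂P, T ω < ⊤) ∧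
    Integrable (fun ω => L (T ω).toNat ω) P ∧
    ∫ ω, L 0 ω ∂P ≤ ∫ ω, L (T ω).toNat ω ∂P := by
  have hτ : IsStoppingTime ℱ T := hT
  have hfin : ∀ᵐ ω ∂P, T ω < ⊤ :=
    ae_lt_top_of_lintegral_pow_lt_top hτ.measurable_enat (by omega) hTmom
  have hfin' : ∀ᵐ ω ∂P, T ω ≠ ⊤ := hfin.mono fun _ => LT.lt.ne
  have hg : Integrable (fun ω => C * ((T ω).toNat + 1 : ℝ) ^ ℓ) P :=
    (integrable_toNat_add_one_pow hτ.measurable_enat hTmom).const_mul C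
  have hdom : ∀ᵐ ω ∂P, ∀ k : ℕ, (k : WithTop ℕ) ≤ T ω →
      ‖L k ω‖ ≤ C * ((T ω).toNat + 1 : ℝ) ^ ℓ := by
    filter_upwards [ae_all_iff.2 hgrowth, hfin'] with ω hω hωT k hk
    calc ‖L k ω‖ ≤ C * (k + 1) ^ ℓ := hω k
      _ ≤ C * ((T ω).toNat + 1 : ℝ) ^ ℓ := by
        gcongr
        exact ENat.toNat_le_toNat hk hωT
  have hstop := stoppedValue_ae_eq_toNat L hfin'
  refine ⟨hfin,
    (integrable_stoppedValue_of_dominated hτ hL.integrable hfin' hg hdom).congr hstop, ?_⟩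
  rw [← integral_congr_ae hstop]
  exact hL.integral_le_integral_stoppedValue_of_dominated hτ hfin' hg hdom
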